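/- arXiv:2405.00173 — 2 statements merged into one kernel-verified Lean document; each statement's English description precedes it below -/
import Mathlib

section
/- Let A_Γ be any Artin group. If Γ̂ has at least three connected components, then the 2-complete Artin complex X̂_Γ is simply connected, i.e., the geometric realization of X̂_Γ is a simply connected topological space. -/
open scoped Pointwise

namespace ArtinPaper

/-! ## Artin groups of labeled defining graphs

A labeled defining graph on a vertex set `S` is encoded by a `CoxeterMatrix S`:
a symmetric matrix of naturals with `1`s on the diagonal, whose off-diagonal
entries are `≥ 2` or `0`, where `M s t = 0` encodes the label `∞` (no edge). -/

variable {S : Type u}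

/-- The alternating word `s t s t ⋯` of length `k`, as an element of the free group on `S`. -/
def braidWord (k : ℕ) (s t : S) : FreeGroup S :=
  ((List.range k).map (fun i => if i % 2 = 0 then FreeGroup.of s else FreeGroup.of t)).prod

/-- The braid relations: for each pair `s ≠ t` with finite label `m = M s t ≠ 0`, the
relator identifying the two alternating words of length `m`. -/
def artinRels (M : CoxeterMatrix S) : Set (FreeGroup S) :=
  {r | ∃ s t : S, s ≠ t ∧ M s t ≠ 0 ∧
    r = braidWord (M s t) s t * (braidWord (M s t) t s)⁻¹}

/-- The Artin group `A_Γ` of the labeled defining graph `M`. -/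
def ArtinGroup (M : CoxeterMatrix S) : Type u := PresentedGroup (artinRels M)

instance (M : CoxeterMatrix S) : Group (ArtinGroup M) := QuotientGroup.Quotient.group _

/-- The standard generator of the Artin group corresponding to a vertex `s`. -/
def artinGen (M : CoxeterMatrix S) (s : S) : ArtinGroup M := PresentedGroup.of s

/-- The standard parabolic subgroup `A_T` generated by the generators in `T`. -/
def stdParabolic (M : CoxeterMatrix S) (T : Set S) : Subgroup (ArtinGroup M) :=
  Subgroup.closure (artinGen M '' T)

/-- The labeled full subgraph spanned by a subset `U` of the vertices. -/
def restrictMatrix (M : CoxeterMatrix S) (U : Set S) : CoxeterMatrix U where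
  M := Matrix.of fun a b => M a b
  isSymm := Matrix.IsSymm.ext fun a b => M.isSymm.apply a b
  diagonal := fun a => M.diagonal a
  off_diagonal := fun a b h => M.off_diagonal a b (fun e => h (Subtype.ext e))

/-- `T ⊆ S` is of finite type if the Coxeter group of the full subgraph on `T` is finite. -/
def FiniteType (M : CoxeterMatrix S) (T : Set S) : Prop :=
  Finite (restrictMatrix M T).Group

/-- `A_Γ` is locally reducible when every finite-type triangle of `Γ` has labels `2, 2, k`. -/
def LocallyReducible (M : CoxeterMatrix S) : Prop :=
  ∀ a b c : S, a ≠ b → a ≠ c → b ≠ c →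
    M a b ≠ 0 → M a c ≠ 0 → M b c ≠ 0 →
    FiniteType M {a, b, c} →
    ((M a b = 2 ∧ M a c = 2) ∨ (M a b = 2 ∧ M b c = 2) ∨ (M a c = 2 ∧ M b c = 2))

/-- The graph `Γ̂`: same vertices as `Γ`, with exactly the edges of `Γ` labeled `2`. -/
def ghat (M : CoxeterMatrix S) : SimpleGraph S where
  Adj s t := s ≠ t ∧ M s t = 2
  symm := ⟨fun s t h => ⟨h.1.symm, (M.isSymm.apply t s).symm.trans h.2⟩⟩
  loopless := ⟨fun s h => h.1 rfl⟩

/-- `T` is (the vertex set of) a connected component of `Γ̂`. -/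
def IsComp (M : CoxeterMatrix S) (T : Set S) : Prop :=
  ∃ c : (ghat M).ConnectedComponent, T = c.supp

/-- `T ⊆ S` is 2-complete: it is a union of connected components of `Γ̂`. -/
def Is2Complete (M : CoxeterMatrix S) (T : Set S) : Prop :=
  ∀ s ∈ T, ∀ t : S, (ghat M).Reachable s t → t ∈ T

/-- The conjugate subgroup `g H g⁻¹`. -/
def conjSub {G : Type*} [Group G] (g : G) (H : Subgroup G) : Subgroup G :=
  Subgroup.map (MulAut.conj g).toMonoidHom H

/-- A parabolic subgroup of the Artin group: a conjugate of a standard parabolic subgroup. -/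
def IsParabolic (M : CoxeterMatrix S) (P : Subgroup (ArtinGroup M)) : Prop :=
  ∃ (g : ArtinGroup M) (T : Set S), P = conjSub g (stdParabolic M T)

/-- A 2-complete parabolic subgroup: a conjugate `g A_T g⁻¹` with `T` 2-complete. -/
def Is2CompleteParabolic (M : CoxeterMatrix S) (P : Subgroup (ArtinGroup M)) : Prop :=
  ∃ (g : ArtinGroup M) (T : Set S), Is2Complete M T ∧ P = conjSub g (stdParabolic M T)

/-- A subgroup `H ≤ G` is weakly malnormal if `H ∩ gHg⁻¹` is finite for some `g`. -/
def WeaklyMalnormal {G : Type*} [Group G] (H : Subgroup G) : Prop :=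
  ∃ g : G, ((H ⊓ conjSub g H : Subgroup G) : Set G).Finite


/-! ## Abstract simplicial complexes -/

/-- An abstract simplicial complex on a vertex type `V`: a downward-closed family of
finite sets of vertices (the faces/simplices). -/
structure SComplex (V : Type u) where
  faces : Set (Set V)
  finite_mem : ∀ s ∈ faces, s.Finite
  down_closed : ∀ s ∈ faces, ∀ t ⊆ s, t ∈ faces

namespace SComplex

/-- `v` is a vertex of the complex `X`. -/
def IsVertex {V : Type u} (X : SComplex V) (v : V) : Prop := {v} ∈ X.faces

/-- The link of a simplex `σ`: faces disjoint from `σ` whose union with `σ` is a face. -/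
def link {V : Type u} (X : SComplex V) (σ : Set V) : SComplex V where
  faces := {τ | Disjoint τ σ ∧ τ ∪ σ ∈ X.faces}
  finite_mem := fun τ hτ => (X.finite_mem _ hτ.2).subset Set.subset_union_left
  down_closed := fun τ hτ τ' hsub =>
    ⟨hτ.1.mono_left hsub, X.down_closed _ hτ.2 _ (Set.union_subset_union_left σ hsub)⟩

/-- A full cycle of length `n` in `X`: an embedded combinatorial circle
`f 0, f 1, …, f (n-1)` (consecutive vertices joined by edges of `X`) which moreover spans a
full subcomplex: any face of `X` with vertices on the circle is a face of the circle. -/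
def IsFullCycle {V : Type u} (X : SComplex V) (n : ℕ) (f : ZMod n → V) : Prop :=
  3 ≤ n ∧ Function.Injective f ∧
    (∀ i : ZMod n, ({f i, f (i + 1)} : Set V) ∈ X.faces) ∧
    (∀ σ ∈ X.faces, σ ⊆ Set.range f → ∃ i : ZMod n, σ ⊆ ({f i, f (i + 1)} : Set V))

/-- `SysGE X k`: the systole of `X` is at least `k`, i.e. every full cycle of `X` has
length at least `k`. -/
def SysGE {V : Type u} (X : SComplex V) (k : ℕ) : Prop :=
  ∀ (n : ℕ) (f : ZMod n → V), X.IsFullCycle n f → k ≤ n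

/-- `X` is locally 6-large: the link of every (nonempty) simplex has systole at least 6. -/
def LocallySixLarge {V : Type u} (X : SComplex V) : Prop :=
  ∀ σ ∈ X.faces, σ.Nonempty → (X.link σ).SysGE 6

/-- Two vertices are adjacent (or equal) when they span a face. -/
def Adj {V : Type u} (X : SComplex V) (u v : V) : Prop := ({u, v} : Set V) ∈ X.faces

/-- `X` is connected: any two vertices are joined by a path of edges. -/
def Connected {V : Type u} (X : SComplex V) : Prop :=
  ∀ u v : V, X.IsVertex u → X.IsVertex v → Relation.ReflTransGen X.Adj u v

/-- An edge walk in `X`: a nonempty list of vertices, consecutive ones spanning edges. -/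
def IsWalk {V : Type u} (X : SComplex V) (l : List V) : Prop :=
  l ≠ [] ∧ (∀ v ∈ l, X.IsVertex v) ∧ l.Chain' X.Adj

/-- Combinatorial homotopy of edge walks, generated by the elementary moves of deleting or
inserting a vertex `b` between consecutive vertices `a, c` whenever `{a, b, c}` is a face,
and deleting or inserting a repeated vertex. -/
inductive EHomotopic {V : Type u} (X : SComplex V) : List V → List V → Prop
  | refl (l : List V) : EHomotopic X l l
  | symm {l₁ l₂ : List V} : EHomotopic X l₁ l₂ → EHomotopic X l₂ l₁
  | trans {l₁ l₂ l₃ : List V} :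
      EHomotopic X l₁ l₂ → EHomotopic X l₂ l₃ → EHomotopic X l₁ l₃
  | triangle (p q : List V) (a b c : V) (h : ({a, b, c} : Set V) ∈ X.faces) :
      EHomotopic X (p ++ a :: b :: c :: q) (p ++ a :: c :: q)
  | doubled (p q : List V) (a : V) (h : ({a} : Set V) ∈ X.faces) :
      EHomotopic X (p ++ a :: a :: q) (p ++ a :: q)

/-- `X` is simply connected: it is connected and every closed edge walk is combinatorially
null-homotopic. -/
def SimplyConnected {V : Type u} (X : SComplex V) : Prop :=
  X.Connected ∧ ∀ (l : List V) (v : V), X.IsWalk l → l.head? = some v →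
    l.getLast? = some v → X.EHomotopic l [v]

/-- `X` is systolic: connected, simply connected and locally 6-large. -/
def IsSystolic {V : Type u} (X : SComplex V) : Prop :=
  X.Connected ∧ X.SimplyConnected ∧ X.LocallySixLarge

end SComplex

/-- A simplicial isomorphism between two abstract simplicial complexes: a bijection between
the vertex sets under which faces correspond exactly to faces. -/
structure SimpIso {V : Type u} {W : Type v} (X : SComplex V) (Y : SComplex W) where
  e : {v : V // X.IsVertex v} ≃ {w : W // Y.IsVertex w}
  face_iff : ∀ σ : Set {v : V // X.IsVertex v},
    (Subtype.val '' σ ∈ X.faces) ↔ (Subtype.val '' (⇑e '' σ) ∈ Y.faces)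


/-! ## The 2-complete Artin complex -/

variable {S : Type u}

/-- The vertices of the 2-complete Artin complex: left cosets `g • A_{S∖T}`
for `T` a connected component of `Γ̂`. -/
def XVertex (M : CoxeterMatrix S) : Type u :=
  {c : Set (ArtinGroup M) // ∃ (g : ArtinGroup M) (T : Set S),
    IsComp M T ∧ c = g • (stdParabolic M Tᶜ : Set (ArtinGroup M))}

/-- The vertex of the 2-complete Artin complex corresponding to the coset `g • A_{S∖T}`. -/
noncomputable def vtx (M : CoxeterMatrix S) (g : ArtinGroup M) (T : Set S) (hT : IsComp M T) : XVertex M :=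
  ⟨g • (stdParabolic M Tᶜ : Set (ArtinGroup M)), g, T, hT, rfl⟩

/-- The 2-complete Artin complex `X̂_Γ`: a finite set of vertices spans a simplex exactly
when the corresponding cosets have nonempty common intersection. -/
noncomputable def XComplex (M : CoxeterMatrix S) : SComplex (XVertex M) where
  faces := {σ | σ.Finite ∧ (⋂ v ∈ σ, (v : XVertex M).1).Nonempty}
  finite_mem := fun _ hs => hs.1
  down_closed := fun s hs t hts =>
    ⟨hs.1.subset hts, hs.2.mono (fun x hx =>
      Set.mem_biInter fun v hv => Set.biInter_subset_of_mem (hts hv) hx)⟩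

noncomputable instance (M : CoxeterMatrix S) : SMul (ArtinGroup M) (XVertex M) where
  smul a v := ⟨a • v.1, by
    obtain ⟨g, T, hT, hc⟩ := v.2
    exact ⟨a * g, T, hT, by rw [hc, mul_smul]⟩⟩

/-- The Artin group acts on the 2-complete Artin complex by left multiplication. -/
noncomputable instance (M : CoxeterMatrix S) : MulAction (ArtinGroup M) (XVertex M) where
  one_smul v := Subtype.ext (one_smul _ v.1)
  mul_smul a b v := Subtype.ext (mul_smul a b v.1)

/-! ## Acylindrical hyperbolicity -/

/-- A geodesic metric space. -/
def IsGeodesicSpace (X : Type*) [MetricSpace X] : Prop :=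
  ∀ x y : X, ∃ f : ℝ → X, f 0 = x ∧ f (dist x y) = y ∧
    ∀ s ∈ Set.Icc (0 : ℝ) (dist x y), ∀ t ∈ Set.Icc (0 : ℝ) (dist x y),
      dist (f s) (f t) = |s - t|

/-- The Gromov product of `x` and `y` at `w`. -/
noncomputable def gromovProd {X : Type*} [MetricSpace X] (x y w : X) : ℝ :=
  (dist x w + dist y w - dist x y) / 2

/-- Gromov hyperbolicity via the four point condition. -/
def IsGromovHyperbolic (X : Type*) [MetricSpace X] : Prop :=
  ∃ δ : ℝ, 0 ≤ δ ∧ ∀ x y z w : X,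
    min (gromovProd x z w) (gromovProd y z w) - δ ≤ gromovProd x y w

/-- An action of `G` on a metric space is acylindrical if for every `ε ≥ 0` there are
`R ≥ 0` and `N` such that for all `x, y` at distance at least `R`, at most `N` elements
`g` satisfy `dist x (g • x) ≤ ε` and `dist y (g • y) ≤ ε`. -/
def AcylindricalAction (G : Type*) (X : Type*) [Group G] [MetricSpace X]
    [MulAction G X] : Prop :=
  ∀ ε : ℝ, 0 ≤ ε → ∃ (R : ℝ) (N : ℕ), 0 ≤ R ∧ ∀ x y : X, R ≤ dist x y →
    ({g : G | dist x (g • x) ≤ ε ∧ dist y (g • y) ≤ ε}).Finite ∧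
    ({g : G | dist x (g • x) ≤ ε ∧ dist y (g • y) ≤ ε}).ncard ≤ N

/-- A virtually cyclic group: one containing a cyclic subgroup of finite index. -/
def VirtuallyCyclic (G : Type*) [Group G] : Prop :=
  ∃ H : Subgroup G, H.FiniteIndex ∧ IsCyclic H

/-- A witness for acylindrical hyperbolicity of `G`: a geodesic Gromov-hyperbolic metric
space with an acylindrical isometric `G`-action with unbounded orbits. -/
structure AcylHypWitness (G : Type u) [Group G] where
  X : Type u
  [metric : MetricSpace X]
  [action : MulAction G X]
  isometric : ∀ g : G, Isometry (fun x : X => g • x)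
  geodesic : IsGeodesicSpace X
  hyperbolic : IsGromovHyperbolic X
  acylindrical : AcylindricalAction G X
  unbounded_orbit : ∃ x : X, ¬ Bornology.IsBounded (MulAction.orbit G x)

/-- `G` is acylindrically hyperbolic: not virtually cyclic, and admitting an acylindrical
isometric action with unbounded orbits on a geodesic Gromov-hyperbolic space. -/
def AcylindricallyHyperbolic (G : Type u) [Group G] : Prop :=
  ¬ VirtuallyCyclic G ∧ Nonempty (AcylHypWitness G)


/-!
Fix a component `c₀` of `Γ̂` and write `A_c = A_{S ∖ c}`. Inserting a vertex `x A_{c₀}` between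
any two consecutive vertices of an edge loop of `X̂_Γ` (with `x` in both cosets) turns the loop into
the walk `x₀ A_{c₀}, x₀ A_{c₁}, x₁ A_{c₀}, x₁ A_{c₂}, …` spelled by the letters
`x_{k-1}⁻¹ x_k ∈ A_{c_k}`, whose product is `1`. Merging two letters of the same factor, deleting a
letter `1`, and moving a letter of `A_c ∩ A_{c'}` from one factor to the other are realised by
triangle moves of such walks, so the loop is null-homotopic as soon as every word of product `1` is
trivial in the free product of the `A_c` amalgamated along their pairwise intersections. To see
this, lift the word to the free group: every braid relator in `s, t` lies in `A_c` for a component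
`c` different from those of `s` and `t` (this is where three components are needed), so the normal
closure of the relators consists of words that are trivial in the amalgam.
-/

lemma exists_ne_ne_of_three {α : Type*} {x y z : α} (hxy : x ≠ y) (hxz : x ≠ z) (hyz : y ≠ z)
    (a b : α) : ∃ c, c ≠ a ∧ c ≠ b := by
  by_contra! h
  have hx := (em (x = a)).imp_right (h x)
  have hy := (em (y = a)).imp_right (h y)
  have hz := (em (z = a)).imp_right (h z)
  grind

section Amalgam

variable {G ι : Type*} [Group G] (H : ι → Subgroup G)

/-- Words in the letters `⟨i, h⟩`, `h ∈ H i`, modulo these moves are the elements of the free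
product of the `H i` amalgamated along their pairwise intersections. -/
inductive LetterEquiv : List (Σ i, H i) → List (Σ i, H i) → Prop
  | refl (ℓ : List (Σ i, H i)) : LetterEquiv ℓ ℓ
  | symm {ℓ₁ ℓ₂ : List (Σ i, H i)} : LetterEquiv ℓ₁ ℓ₂ → LetterEquiv ℓ₂ ℓ₁
  | trans {ℓ₁ ℓ₂ ℓ₃ : List (Σ i, H i)} :
      LetterEquiv ℓ₁ ℓ₂ → LetterEquiv ℓ₂ ℓ₃ → LetterEquiv ℓ₁ ℓ₃
  | one (p q : List (Σ i, H i)) (i : ι) : LetterEquiv (p ++ ⟨i, 1⟩ :: q) (p ++ q)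
  | mul (p q : List (Σ i, H i)) (i : ι) (h h' : H i) :
      LetterEquiv (p ++ ⟨i, h⟩ :: ⟨i, h'⟩ :: q) (p ++ ⟨i, h * h'⟩ :: q)
  | relabel (p q : List (Σ i, H i)) {i j : ι} (g : G) (hi : g ∈ H i) (hj : g ∈ H j) :
      LetterEquiv (p ++ ⟨i, ⟨g, hi⟩⟩ :: q) (p ++ ⟨j, ⟨g, hj⟩⟩ :: q)

def lettersProd (ℓ : List (Σ i, H i)) : G := (ℓ.map fun a => (a.2 : G)).prod

variable {H}

@[simp] lemma lettersProd_nil : lettersProd H [] = 1 := rfl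

@[simp] lemma lettersProd_cons (a : Σ i, H i) (ℓ : List (Σ i, H i)) :
    lettersProd H (a :: ℓ) = a.2 * lettersProd H ℓ := List.prod_cons

namespace LetterEquiv

lemma append {ℓ ℓ' : List (Σ i, H i)} (h : LetterEquiv H ℓ ℓ') (p q : List (Σ i, H i)) :
    LetterEquiv H (p ++ ℓ ++ q) (p ++ ℓ' ++ q) := by
  induction h with
  | refl => exact refl _
  | symm _ ih => exact ih.symm
  | trans _ _ ih₁ ih₂ => exact ih₁.trans ih₂
  | one p' q' i => simpa using one (p ++ p') (q' ++ q) i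
  | mul p' q' i h h' => simpa using mul (p ++ p') (q' ++ q) i h h'
  | relabel p' q' g hi hj => simpa using relabel (p ++ p') (q' ++ q) g hi hj

lemma append_left {ℓ ℓ' : List (Σ i, H i)} (h : LetterEquiv H ℓ ℓ') (p : List (Σ i, H i)) :
    LetterEquiv H (p ++ ℓ) (p ++ ℓ') := by
  simpa using h.append p []

lemma append_right {ℓ ℓ' : List (Σ i, H i)} (h : LetterEquiv H ℓ ℓ') (q : List (Σ i, H i)) :
    LetterEquiv H (ℓ ++ q) (ℓ' ++ q) :=
  h.append [] q

lemma singleton_nil {i : ι} {h : H i} (hh : (h : G) = 1) : LetterEquiv H [⟨i, h⟩] [] := by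
  obtain rfl : h = 1 := Subtype.ext hh
  exact one [] [] i

lemma pair_singleton {i : ι} {h h' h'' : H i} (hh : (h * h' : G) = h'') :
    LetterEquiv H [⟨i, h⟩, ⟨i, h'⟩] [⟨i, h''⟩] := by
  obtain rfl : h * h' = h'' := Subtype.ext hh
  exact mul [] [] i h h'

lemma pair_nil {i : ι} {h h' : H i} (hh : (h * h' : G) = 1) :
    LetterEquiv H [⟨i, h⟩, ⟨i, h'⟩] [] :=
  (pair_singleton rfl).trans (singleton_nil (h := h * h') hh)

end LetterEquiv

end Amalgam

section WordLetters

variable {α ι : Type*} {rels : Set (FreeGroup α)}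

def stdSubgroup (rels : Set (FreeGroup α)) (T : Set α) : Subgroup (PresentedGroup rels) :=
  Subgroup.closure (PresentedGroup.of '' T)

lemma map_mk_closure_of (T : Set α) :
    (Subgroup.closure (FreeGroup.of '' T)).map (PresentedGroup.mk rels) = stdSubgroup rels T := by
  rw [MonoidHom.map_closure, Set.image_image]
  rfl

lemma mk_mem_stdSubgroup {T : Set α} {x : FreeGroup α}
    (hx : x ∈ Subgroup.closure (FreeGroup.of '' T)) :
    PresentedGroup.mk rels x ∈ stdSubgroup rels T :=
  map_mk_closure_of T ▸ Subgroup.mem_map_of_mem _ hx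

lemma FreeGroup.mk_singleton_mem_closure {T : Set α} {a : α} (ha : a ∈ T) (b : Bool) :
    FreeGroup.mk [(a, b)] ∈ Subgroup.closure (FreeGroup.of '' T) := by
  have hof : FreeGroup.of a ∈ Subgroup.closure (FreeGroup.of '' T) :=
    Subgroup.subset_closure ⟨a, ha, rfl⟩
  cases b
  · simpa [FreeGroup.of, FreeGroup.inv_mk, FreeGroup.invRev] using Subgroup.inv_mem _ hof
  · exact hof

variable {T : ι → Set α} (cover : ∀ a, {i // a ∈ T i})

def letterOf (p : α × Bool) : Σ i, stdSubgroup rels (T i) :=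
  ⟨cover p.1, ⟨PresentedGroup.mk rels (FreeGroup.mk [p]),
    mk_mem_stdSubgroup (FreeGroup.mk_singleton_mem_closure (cover p.1).2 p.2)⟩⟩

lemma lettersProd_map_letterOf (L : List (α × Bool)) :
    lettersProd _ (L.map (letterOf (rels := rels) cover)) =
      PresentedGroup.mk rels (FreeGroup.mk L) := by
  induction L with
  | nil => rfl
  | cons p L ih =>
    rw [List.map_cons, lettersProd_cons, ih]
    exact (map_mul _ _ _).symm.trans (congrArg _ FreeGroup.mul_mk)

lemma letterEquiv_letterOf_cancel (a : α) (b : Bool) :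
    LetterEquiv _ [letterOf (rels := rels) cover (a, b), letterOf cover (a, !b)] [] :=
  LetterEquiv.pair_nil <| by
    have : FreeGroup.mk [(a, b), (a, !b)] = 1 :=
      Quot.sound (FreeGroup.Red.Step.not (L₁ := []) (L₂ := []))
    rw [← map_mul, FreeGroup.mul_mk, List.singleton_append, this, map_one]

lemma letterEquiv_map_letterOf_of_red {L₁ L₂ : List (α × Bool)} (h : FreeGroup.Red L₁ L₂) :
    LetterEquiv _ (L₁.map (letterOf (rels := rels) cover)) (L₂.map (letterOf cover)) := by
  induction h with
  | refl => exact .refl _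
  | tail _ hstep ih =>
    obtain @⟨L, L', a, b⟩ := hstep
    refine ih.trans ?_
    simpa using (letterEquiv_letterOf_cancel (rels := rels) cover a b).append
      (L.map (letterOf cover)) (L'.map (letterOf cover))

variable [DecidableEq α]

def wordLetters (x : FreeGroup α) : List (Σ i, stdSubgroup rels (T i)) :=
  x.toWord.map (letterOf cover)

@[simp] lemma wordLetters_one : wordLetters (rels := rels) (T := T) cover 1 = [] := rfl

lemma lettersProd_wordLetters (x : FreeGroup α) :
    lettersProd _ (wordLetters (rels := rels) (T := T) cover x) = PresentedGroup.mk rels x := by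
  rw [wordLetters, lettersProd_map_letterOf, FreeGroup.mk_toWord]

lemma wordLetters_mul (x y : FreeGroup α) :
    LetterEquiv _ (wordLetters (rels := rels) (T := T) cover (x * y))
      (wordLetters cover x ++ wordLetters cover y) := by
  have := letterEquiv_map_letterOf_of_red (rels := rels) cover
    (FreeGroup.toWord_mul x y ▸ FreeGroup.reduce.red)
  simpa [wordLetters] using this.symm

lemma wordLetters_append_inv (x : FreeGroup α) :
    LetterEquiv _ (wordLetters (rels := rels) (T := T) cover x ++ wordLetters cover x⁻¹) [] := by
  simpa using (wordLetters_mul (rels := rels) (T := T) cover x x⁻¹).symm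

lemma wordLetters_equiv_singleton {i : ι} {x : FreeGroup α}
    (hx : x ∈ Subgroup.closure (FreeGroup.of '' T i)) :
    LetterEquiv _ (wordLetters (rels := rels) cover x)
      [⟨i, ⟨PresentedGroup.mk rels x, mk_mem_stdSubgroup hx⟩⟩] := by
  induction hx using Subgroup.closure_induction'' with
  | mem _ hy =>
    obtain ⟨a, ha, rfl⟩ := hy
    exact LetterEquiv.relabel [] [] _ _ _
  | inv_mem _ hy =>
    obtain ⟨a, ha, rfl⟩ := hy
    exact LetterEquiv.relabel [] [] _ _ _
  | one => exact (LetterEquiv.singleton_nil (map_one _)).symm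
  | mul x y hx hy ihx ihy =>
    refine (wordLetters_mul cover x y).trans ?_
    exact ((ihx.append_right _).trans (ihy.append_left _)).trans
      (LetterEquiv.pair_singleton (map_mul _ x y).symm)

lemma exists_wordLetters_equiv (ℓ : List (Σ i, stdSubgroup rels (T i))) :
    ∃ x, PresentedGroup.mk rels x = lettersProd _ ℓ ∧ LetterEquiv _ ℓ (wordLetters cover x) := by
  induction ℓ with
  | nil => exact ⟨1, map_one _, .refl _⟩
  | cons a ℓ ih =>
    obtain ⟨x, hx, hℓ⟩ := ih
    obtain ⟨i, h, hh⟩ := a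
    rw [← map_mk_closure_of] at hh
    obtain ⟨y, hy, rfl⟩ := Subgroup.mem_map.1 hh
    refine ⟨y * x, by rw [map_mul, hx, lettersProd_cons], ?_⟩
    have hhead := (wordLetters_equiv_singleton (rels := rels) cover hy).symm.append_right
      (wordLetters cover x)
    exact ((hℓ.append_left [_]).trans hhead).trans (wordLetters_mul cover y x).symm

def trivialWords : Subgroup (FreeGroup α) where
  carrier := {x | LetterEquiv _ (wordLetters (rels := rels) (T := T) cover x) []}
  one_mem' := .refl _
  mul_mem' {x y} hx hy := (wordLetters_mul cover x y).trans ((hx.append_right _).trans hy)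
  inv_mem' {x} hx := (hx.symm.append_right _).trans (wordLetters_append_inv cover x)

instance : (trivialWords (rels := rels) (T := T) cover).Normal where
  conj_mem n hn g := by
    refine ((wordLetters_mul cover _ _).trans ((wordLetters_mul cover g n).append [] _)).trans ?_
    have := hn.append (wordLetters cover g) (wordLetters cover g⁻¹)
    rw [List.append_nil] at this
    exact this.trans (wordLetters_append_inv cover g)

end WordLetters

section PresentedGroup

variable {α ι : Type*} {rels : Set (FreeGroup α)} {T : ι → Set α}

lemma exists_lettersProd_eq (hcover : ∀ a, ∃ i, a ∈ T i) (g : PresentedGroup rels) :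
    ∃ ℓ : List (Σ i, stdSubgroup rels (T i)), lettersProd _ ℓ = g := by
  classical
  obtain ⟨x, rfl⟩ := PresentedGroup.mk_surjective rels g
  exact ⟨wordLetters (fun a => ⟨_, (hcover a).choose_spec⟩) x, lettersProd_wordLetters _ x⟩

theorem letterEquiv_nil_of_lettersProd_eq_one (hcover : ∀ a, ∃ i, a ∈ T i)
    (hrels : ∀ r ∈ rels, ∃ i, r ∈ Subgroup.closure (FreeGroup.of '' T i))
    {ℓ : List (Σ i, stdSubgroup rels (T i))} (h : lettersProd _ ℓ = 1) :
    LetterEquiv _ ℓ [] := by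
  classical
  let cover : ∀ a, {i // a ∈ T i} := fun a => ⟨_, (hcover a).choose_spec⟩
  have hrels_trivial : rels ⊆ trivialWords (rels := rels) cover := fun r hr => by
    obtain ⟨i, hi⟩ := hrels r hr
    exact (wordLetters_equiv_singleton cover hi).trans
      (LetterEquiv.singleton_nil (PresentedGroup.one_of_mem hr))
  obtain ⟨x, hx, hℓ⟩ := exists_wordLetters_equiv cover ℓ
  exact hℓ.trans (Subgroup.normalClosure_le_normal hrels_trivial
    (PresentedGroup.mk_eq_one_iff.1 (hx.trans h)))

end PresentedGroup

namespace SComplex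

variable {V : Type*} {X : SComplex V}

lemma EHomotopic.append {l l' : List V} (h : X.EHomotopic l l') (p q : List V) :
    X.EHomotopic (p ++ l ++ q) (p ++ l' ++ q) := by
  induction h with
  | refl => exact .refl _
  | symm _ ih => exact ih.symm
  | trans _ _ ih₁ ih₂ => exact ih₁.trans ih₂
  | triangle p' q' a b c hf => simpa using triangle (p ++ p') (q' ++ q) a b c hf
  | doubled p' q' a hf => simpa using doubled (p ++ p') (q' ++ q) a hf

lemma EHomotopic.backtrack {a b : V} (hab : ({a, b} : Set V) ∈ X.faces) (p q : List V) :
    X.EHomotopic (p ++ a :: b :: a :: q) (p ++ a :: q) := by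
  have haba : ({a, b, a} : Set V) = {a, b} := by ext; simp [or_comm]
  exact (triangle p q a b a (haba ▸ hab)).trans
    (doubled p q a (X.down_closed _ hab _ (Set.singleton_subset_iff.2 (Set.mem_insert a _))))

end SComplex

section Relators

variable (M : CoxeterMatrix S)

abbrev complParabolic (c : (ghat M).ConnectedComponent) : Subgroup (ArtinGroup M) :=
  stdParabolic M (c.supp)ᶜ

variable {M}

lemma braidWord_mem_closure {U : Set S} {s t : S} (hs : s ∈ U) (ht : t ∈ U) (k : ℕ) :
    braidWord k s t ∈ Subgroup.closure (FreeGroup.of '' U) := by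
  refine Subgroup.list_prod_mem _ fun x hx => ?_
  obtain ⟨i, -, rfl⟩ := List.mem_map.1 hx
  split_ifs
  · exact Subgroup.subset_closure ⟨s, hs, rfl⟩
  · exact Subgroup.subset_closure ⟨t, ht, rfl⟩

lemma exists_mem_compl_supp (h : ∀ a : (ghat M).ConnectedComponent, ∃ c, c ≠ a) (s : S) :
    ∃ c : (ghat M).ConnectedComponent, s ∈ (c.supp)ᶜ := by
  obtain ⟨c, hc⟩ := h ((ghat M).connectedComponentMk s)
  exact ⟨c, fun hs => hc hs.symm⟩

lemma exists_artinRel_mem_closure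
    (havoid : ∀ a b : (ghat M).ConnectedComponent, ∃ c, c ≠ a ∧ c ≠ b) :
    ∀ r ∈ artinRels M, ∃ c : (ghat M).ConnectedComponent,
      r ∈ Subgroup.closure (FreeGroup.of '' (c.supp)ᶜ) := by
  rintro _ ⟨s, t, -, -, rfl⟩
  obtain ⟨c, hcs, hct⟩ :=
    havoid ((ghat M).connectedComponentMk s) ((ghat M).connectedComponentMk t)
  have hs : s ∈ (c.supp)ᶜ := fun h => hcs h.symm
  have ht : t ∈ (c.supp)ᶜ := fun h => hct h.symm
  exact ⟨c, mul_mem (braidWord_mem_closure hs ht _) (inv_mem (braidWord_mem_closure ht hs _))⟩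

lemma exists_lettersProd_eq_of_two_components
    (h : ∀ a : (ghat M).ConnectedComponent, ∃ c, c ≠ a) (g : ArtinGroup M) :
    ∃ ℓ : List (Σ c, complParabolic M c), lettersProd _ ℓ = g :=
  exists_lettersProd_eq (rels := artinRels M)
    (T := fun c : (ghat M).ConnectedComponent => (c.supp)ᶜ) (exists_mem_compl_supp h) g

lemma letterEquiv_nil_of_three_components
    (havoid : ∀ a b : (ghat M).ConnectedComponent, ∃ c, c ≠ a ∧ c ≠ b)
    {ℓ : List (Σ c, complParabolic M c)} (h : lettersProd _ ℓ = 1) : LetterEquiv _ ℓ [] :=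
  letterEquiv_nil_of_lettersProd_eq_one (rels := artinRels M)
    (T := fun c : (ghat M).ConnectedComponent => (c.supp)ᶜ)
    (exists_mem_compl_supp fun a => (havoid a a).imp fun _ => And.left)
    (exists_artinRel_mem_closure havoid) h

end Relators

section Complex

variable (M : CoxeterMatrix S)

noncomputable def cosetVertex (g : ArtinGroup M) (c : (ghat M).ConnectedComponent) :
    XVertex M :=
  vtx M g c.supp ⟨c, rfl⟩

variable {M}

lemma mem_cosetVertex_iff {g x : ArtinGroup M} {c : (ghat M).ConnectedComponent} :
    x ∈ (cosetVertex M g c).1 ↔ g⁻¹ * x ∈ complParabolic M c :=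
  mem_leftCoset_iff g

lemma mem_cosetVertex_self (g : ArtinGroup M) (c : (ghat M).ConnectedComponent) :
    g ∈ (cosetVertex M g c).1 :=
  mem_own_leftCoset _ g

lemma mul_mem_cosetVertex (g : ArtinGroup M) {c : (ghat M).ConnectedComponent}
    {h : ArtinGroup M} (hh : h ∈ complParabolic M c) : g * h ∈ (cosetVertex M g c).1 := by
  rwa [mem_cosetVertex_iff, inv_mul_cancel_left]

lemma cosetVertex_eq_of_mem {g x : ArtinGroup M} {c : (ghat M).ConnectedComponent}
    (hx : x ∈ (cosetVertex M g c).1) : cosetVertex M x c = cosetVertex M g c := by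
  refine Subtype.ext ((leftCoset_eq_iff _).2 ?_)
  simpa using inv_mem (mem_cosetVertex_iff.1 hx)

lemma cosetVertex_mul (g : ArtinGroup M) {c : (ghat M).ConnectedComponent} {h : ArtinGroup M}
    (hh : h ∈ complParabolic M c) : cosetVertex M (g * h) c = cosetVertex M g c :=
  cosetVertex_eq_of_mem (mul_mem_cosetVertex g hh)

lemma exists_eq_cosetVertex (v : XVertex M) : ∃ g c, v = cosetVertex M g c := by
  obtain ⟨g, _, ⟨c, rfl⟩, hv⟩ := v.2
  exact ⟨g, c, Subtype.ext hv⟩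

lemma exists_eq_cosetVertex_of_mem {v : XVertex M} {x : ArtinGroup M} (hx : x ∈ v.1) :
    ∃ c, v = cosetVertex M x c := by
  obtain ⟨g, c, rfl⟩ := exists_eq_cosetVertex v
  exact ⟨c, (cosetVertex_eq_of_mem hx).symm⟩

namespace XComplex

lemma mem_faces {σ : Set (XVertex M)} (hσ : σ.Finite) {x : ArtinGroup M}
    (hx : ∀ v ∈ σ, x ∈ v.1) : σ ∈ (XComplex M).faces :=
  ⟨hσ, x, Set.mem_iInter₂.2 hx⟩

lemma pair_mem_faces {a b : XVertex M} {x : ArtinGroup M} (ha : x ∈ a.1) (hb : x ∈ b.1) :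
    ({a, b} : Set (XVertex M)) ∈ (XComplex M).faces :=
  mem_faces (Set.toFinite _) (by rintro v (rfl | rfl) <;> assumption)

lemma triple_mem_faces {a b c : XVertex M} {x : ArtinGroup M} (ha : x ∈ a.1)
    (hb : x ∈ b.1) (hc : x ∈ c.1) : ({a, b, c} : Set (XVertex M)) ∈ (XComplex M).faces :=
  mem_faces (Set.toFinite _) (by rintro v (rfl | rfl | rfl) <;> assumption)

lemma exists_mem_of_adj {a b : XVertex M} (h : (XComplex M).Adj a b) :
    ∃ x, x ∈ a.1 ∧ x ∈ b.1 := by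
  obtain ⟨-, x, hx⟩ := h
  simp only [Set.mem_iInter] at hx
  exact ⟨x, hx a (by simp), hx b (by simp)⟩

end XComplex

end Complex

section LetterWalk

open SComplex

variable {M : CoxeterMatrix S} (c₀ : (ghat M).ConnectedComponent)

noncomputable def letterWalk :
    ArtinGroup M → List (Σ c, complParabolic M c) → List (XVertex M)
  | g, [] => [cosetVertex M g c₀]
  | g, ⟨c, h⟩ :: ℓ => cosetVertex M g c₀ :: cosetVertex M g c :: letterWalk (g * h) ℓ

lemma letterWalk_eq_cons (g : ArtinGroup M) (ℓ : List (Σ c, complParabolic M c)) :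
    ∃ t, letterWalk c₀ g ℓ = cosetVertex M g c₀ :: t := by
  cases ℓ with
  | nil => exact ⟨[], rfl⟩
  | cons a ℓ => exact ⟨_, rfl⟩

lemma letterWalk_append_ehomotopic {ℓ ℓ' : List (Σ c, complParabolic M c)}
    (h : ∀ g, (XComplex M).EHomotopic (letterWalk c₀ g ℓ) (letterWalk c₀ g ℓ'))
    (p : List (Σ c, complParabolic M c)) (g : ArtinGroup M) :
    (XComplex M).EHomotopic (letterWalk c₀ g (p ++ ℓ)) (letterWalk c₀ g (p ++ ℓ')) := by
  induction p generalizing g with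
  | nil => exact h g
  | cons a p ih =>
    obtain ⟨c, h⟩ := a
    simpa [letterWalk] using (ih (g * h)).append [cosetVertex M g c₀, cosetVertex M g c] []

lemma letterWalk_one_ehomotopic (g : ArtinGroup M) (c : (ghat M).ConnectedComponent)
    (q : List (Σ c, complParabolic M c)) :
    (XComplex M).EHomotopic (letterWalk c₀ g (⟨c, 1⟩ :: q)) (letterWalk c₀ g q) := by
  obtain ⟨t, ht⟩ := letterWalk_eq_cons c₀ g q
  simp only [letterWalk, OneMemClass.coe_one, mul_one, ht]
  exact EHomotopic.backtrack
    (XComplex.pair_mem_faces (mem_cosetVertex_self g c₀) (mem_cosetVertex_self g c)) [] t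

lemma letterWalk_mul_ehomotopic (g : ArtinGroup M) (c : (ghat M).ConnectedComponent)
    (h h' : complParabolic M c) (q : List (Σ c, complParabolic M c)) :
    (XComplex M).EHomotopic (letterWalk c₀ g (⟨c, h⟩ :: ⟨c, h'⟩ :: q))
      (letterWalk c₀ g (⟨c, h * h'⟩ :: q)) := by
  simp only [letterWalk, cosetVertex_mul g h.2, Subgroup.coe_mul, mul_assoc]
  exact EHomotopic.backtrack (XComplex.pair_mem_faces (mul_mem_cosetVertex g h.2)
    (mem_cosetVertex_self _ c₀)) [_] _

lemma letterWalk_relabel_ehomotopic (g : ArtinGroup M) {c c' : (ghat M).ConnectedComponent}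
    {h : ArtinGroup M} (hc : h ∈ complParabolic M c) (hc' : h ∈ complParabolic M c')
    (q : List (Σ c, complParabolic M c)) :
    (XComplex M).EHomotopic (letterWalk c₀ g (⟨c, ⟨h, hc⟩⟩ :: q))
      (letterWalk c₀ g (⟨c', ⟨h, hc'⟩⟩ :: q)) := by
  obtain ⟨t, ht⟩ := letterWalk_eq_cons c₀ (g * h) q
  simp only [letterWalk, ht]
  -- pass through `g A_{c₀}, g A_c, g A_{c'}, g h A_{c₀}`: `g h` lies in the last three cosets
  -- and `g` in the first three
  have hinsert := EHomotopic.triangle [cosetVertex M g c₀] t _ (cosetVertex M g c') _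
    (XComplex.triple_mem_faces (mul_mem_cosetVertex g hc) (mul_mem_cosetVertex g hc')
      (mem_cosetVertex_self _ c₀))
  have hdelete := EHomotopic.triangle [] (cosetVertex M (g * h) c₀ :: t) _ _ _
    (XComplex.triple_mem_faces (mem_cosetVertex_self g c₀) (mem_cosetVertex_self g c)
      (mem_cosetVertex_self g c'))
  exact hinsert.symm.trans hdelete

lemma LetterEquiv.ehomotopic_letterWalk {ℓ ℓ' : List (Σ c, complParabolic M c)}
    (h : LetterEquiv _ ℓ ℓ') (g : ArtinGroup M) :
    (XComplex M).EHomotopic (letterWalk c₀ g ℓ) (letterWalk c₀ g ℓ') := by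
  induction h generalizing g with
  | refl => exact .refl _
  | symm _ ih => exact (ih g).symm
  | trans _ _ ih₁ ih₂ => exact (ih₁ g).trans (ih₂ g)
  | one p q c => exact letterWalk_append_ehomotopic c₀ (letterWalk_one_ehomotopic c₀ · c q) p g
  | mul p q c h h' =>
    exact letterWalk_append_ehomotopic c₀ (letterWalk_mul_ehomotopic c₀ · c h h' q) p g
  | relabel p q h hc hc' =>
    exact letterWalk_append_ehomotopic c₀ (letterWalk_relabel_ehomotopic c₀ · hc hc' q) p g

lemma exists_letterWalk_ehomotopic (l : List (XVertex M)) {u : XVertex M} {x y : ArtinGroup M}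
    (hl : (u :: l).IsChain (XComplex M).Adj) (hx : x ∈ u.1)
    (hy : y ∈ ((u :: l).getLast (List.cons_ne_nil _ _)).1) :
    ∃ ℓ, x * lettersProd _ ℓ = y ∧ (XComplex M).EHomotopic
      (cosetVertex M x c₀ :: u :: l ++ [cosetVertex M y c₀]) (letterWalk c₀ x ℓ) := by
  induction l generalizing u x with
  | nil =>
    obtain ⟨c, rfl⟩ := exists_eq_cosetVertex_of_mem hx
    refine ⟨[⟨c, ⟨x⁻¹ * y, mem_cosetVertex_iff.1 hy⟩⟩], by simp, ?_⟩
    simpa [letterWalk] using .refl _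
  | cons u' l ih =>
    rw [List.isChain_cons_cons] at hl
    obtain ⟨x', hxu, hxu'⟩ := XComplex.exists_mem_of_adj hl.1
    obtain ⟨ℓ, hprod, hhom⟩ := ih hl.2 hxu' (by simpa using hy)
    obtain ⟨c, rfl⟩ := exists_eq_cosetVertex_of_mem hx
    refine ⟨⟨c, ⟨x⁻¹ * x', mem_cosetVertex_iff.1 hxu⟩⟩ :: ℓ, by simp [← hprod, mul_assoc], ?_⟩
    have hinsert := EHomotopic.triangle [cosetVertex M x c₀] (l ++ [cosetVertex M y c₀])
      _ (cosetVertex M x' c₀) _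
      (XComplex.triple_mem_faces hxu (mem_cosetVertex_self x' c₀) hxu')
    have hrest := hhom.append [cosetVertex M x c₀, cosetVertex M x c] []
    simp only [List.cons_append, List.nil_append, List.append_nil] at hinsert hrest ⊢
    rw [letterWalk, mul_inv_cancel_left]
    exact hinsert.symm.trans hrest

lemma reflTransGen_adj_cosetVertex_mul (g : ArtinGroup M) (ℓ : List (Σ c, complParabolic M c)) :
    Relation.ReflTransGen (XComplex M).Adj (cosetVertex M g c₀)
      (cosetVertex M (g * lettersProd _ ℓ) c₀) := by
  induction ℓ generalizing g with
  | nil => simpa using .refl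
  | cons a ℓ ih =>
    obtain ⟨c, h⟩ := a
    have hcoset : (XComplex M).Adj (cosetVertex M g c₀) (cosetVertex M g c) :=
      XComplex.pair_mem_faces (mem_cosetVertex_self g c₀) (mem_cosetVertex_self g c)
    have hnext : (XComplex M).Adj (cosetVertex M g c) (cosetVertex M (g * h) c₀) :=
      XComplex.pair_mem_faces (mul_mem_cosetVertex g h.2) (mem_cosetVertex_self _ c₀)
    simpa [mul_assoc] using ((ih (g * h)).head hnext).head hcoset

end LetterWalk

section SimplyConnected

open SComplex

variable {M : CoxeterMatrix S}

lemma XComplex.connected (h : ∀ a : (ghat M).ConnectedComponent, ∃ c, c ≠ a) :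
    (XComplex M).Connected := by
  intro u v _ _
  obtain ⟨g, c, rfl⟩ := exists_eq_cosetVertex u
  obtain ⟨g', c', rfl⟩ := exists_eq_cosetVertex v
  obtain ⟨ℓ, hℓ⟩ := exists_lettersProd_eq_of_two_components h (g⁻¹ * g')
  have hpath := reflTransGen_adj_cosetVertex_mul c g ℓ
  rw [hℓ, mul_inv_cancel_left] at hpath
  exact hpath.tail
    (XComplex.pair_mem_faces (mem_cosetVertex_self g' c) (mem_cosetVertex_self g' c'))

lemma XComplex.ehomotopic_singleton_of_isChain
    (havoid : ∀ a b : (ghat M).ConnectedComponent, ∃ c, c ≠ a ∧ c ≠ b)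
    {v : XVertex M} {l : List (XVertex M)} (hl : (v :: l).IsChain (XComplex M).Adj)
    (hlast : (v :: l).getLast? = some v) : (XComplex M).EHomotopic (v :: l) [v] := by
  obtain ⟨x, c, rfl⟩ := exists_eq_cosetVertex v
  have hx := mem_cosetVertex_self x c
  have hlast' : (cosetVertex M x c :: l).getLast (List.cons_ne_nil _ _) = cosetVertex M x c :=
    Option.some.inj ((List.getLast?_eq_getLast_of_ne_nil _).symm.trans hlast)
  -- with `c₀ = c` the capping vertices `x A_{c₀}` are `v` itself
  obtain ⟨ℓ, hprod, hhom⟩ :=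
    exists_letterWalk_ehomotopic c l hl hx (y := x) (by rw [hlast']; exact hx)
  have hnull := letterEquiv_nil_of_three_components havoid (mul_eq_left.1 hprod)
  have hv : ({cosetVertex M x c} : Set (XVertex M)) ∈ (XComplex M).faces :=
    XComplex.mem_faces (Set.toFinite _) (by simpa using hx)
  obtain ⟨L, hL⟩ : ∃ L, L ++ [cosetVertex M x c] = cosetVertex M x c :: l :=
    ⟨_, List.dropLast_append_getLast? _ hlast⟩
  have hback : (XComplex M).EHomotopic ((cosetVertex M x c :: l) ++ [cosetVertex M x c])
      (cosetVertex M x c :: l) := by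
    rw [← hL]
    simpa using EHomotopic.doubled L [] _ hv
  exact ((EHomotopic.doubled [] _ _ hv).trans hback).symm.trans
    (hhom.trans (hnull.ehomotopic_letterWalk c x))

end SimplyConnected

theorem twoCompleteArtinComplex_simplyConnected_general
    {S : Type u} (M : CoxeterMatrix S)
    (hthree : ∃ c₁ c₂ c₃ : (ghat M).ConnectedComponent, c₁ ≠ c₂ ∧ c₁ ≠ c₃ ∧ c₂ ≠ c₃) :
    (XComplex M).SimplyConnected := by
  obtain ⟨c₁, c₂, c₃, h₁₂, h₁₃, h₂₃⟩ := hthree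
  have havoid := exists_ne_ne_of_three h₁₂ h₁₃ h₂₃
  refine ⟨XComplex.connected fun a => (havoid a a).imp fun _ => And.left, ?_⟩
  rintro (_ | ⟨v, l⟩) w ⟨hne, -, hl⟩ hhead hlast
  · exact absurd rfl hne
  · obtain rfl : v = w := Option.some.inj hhead
    exact XComplex.ehomotopic_singleton_of_isChain havoid hl hlast

/-- For any Artin group `A_Γ`, if `Γ̂` has at least three connected
components then the 2-complete Artin complex `X̂_Γ` is simply connected. -/
theorem twoCompleteArtinComplex_simplyConnected
    {S : Type u} [Fintype S] (M : CoxeterMatrix S)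
    (hthree : ∃ c₁ c₂ c₃ : (ghat M).ConnectedComponent, c₁ ≠ c₂ ∧ c₁ ≠ c₃ ∧ c₂ ≠ c₃) :
    (XComplex M).SimplyConnected :=
  twoCompleteArtinComplex_simplyConnected_general M hthree

end ArtinPaper
end

section
/- Let A_Γ be a locally reducible Artin group and let R ⊆ S be a subset with |R| ≥ 3 that spans a clique in Γ and is of finite type (i.e., the Coxeter group W_R is finite). Then R is contained in a single connected component of Γ̂. -/
/-!
Given `a ≠ b` in `R` with `m_ab ≠ 2`, pick a third vertex `c ∈ R`. The triangle `{a, b, c}` is of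
finite type: for `T ⊆ R` the natural map `W_T → W_R` is injective, because extension by zero
intertwines the geometric representations of `W_T` and `W_R`, and geometric representations are
faithful (Tits). Local reducibility then forces `m_ac = m_bc = 2`, so `a - c - b` is a path in `Γ̂`.
-/

open scoped Pointwise

open Polynomial Polynomial.Chebyshev Real

namespace Real

variable {m : ℕ}

lemma sin_pi_div_pos (hm : 2 ≤ m) : 0 < sin (π / m) :=
  sin_pos_of_pos_of_lt_pi (by positivity) (div_lt_self pi_pos (by exact_mod_cast hm))

lemma sq_cos_pi_div_lt_one (hm : 2 ≤ m) : cos (π / m) ^ 2 < 1 := by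
  rw [cos_sq', sub_lt_self_iff]
  exact pow_pos (sin_pi_div_pos hm) 2

end Real

namespace Polynomial.Chebyshev

variable {m : ℕ}

lemma U_real_cos_pi_div_add_two_mul (hm : 2 ≤ m) (n : ℤ) :
    (U ℝ (n + 2 * m)).eval (cos (π / m)) = (U ℝ n).eval (cos (π / m)) := by
  refine mul_right_cancel₀ (sin_pi_div_pos hm).ne' ?_
  have hm0 : (m : ℝ) ≠ 0 := by positivity
  rw [U_real_cos, U_real_cos, ← sin_add_two_pi (((n : ℝ) + 1) * (π / m))]
  congr 1
  push_cast
  field_simp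
  ring

lemma U_real_cos_pi_div_nonneg (hm : m ≠ 1) {n : ℤ} (hn : -1 ≤ n)
    (hnm : m = 0 ∨ n < m) : 0 ≤ (U ℝ n).eval (cos (π / m)) := by
  rcases eq_or_ne m 0 with rfl | hm0
  · simp only [CharP.cast_eq_zero, div_zero, cos_zero, U_eval_one]
    exact_mod_cast (by omega : 0 ≤ n + 1)
  have hm2 : 2 ≤ m := by omega
  have hnm : n + 1 ≤ m := by omega
  refine nonneg_of_mul_nonneg_left ?_ (sin_pi_div_pos hm2)
  rw [U_real_cos]
  apply sin_nonneg_of_nonneg_of_le_pi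
  · have : (0 : ℝ) ≤ n + 1 := by exact_mod_cast (by omega : (0 : ℤ) ≤ n + 1)
    positivity
  · calc ((n : ℝ) + 1) * (π / m) ≤ m * (π / m) := by
          gcongr; exact_mod_cast hnm
      _ = π := by field_simp

end Polynomial.Chebyshev

namespace CoxeterSystem

open List

variable {B : Type*} {M : CoxeterMatrix B} {W : Type*} [Group W] (cs : CoxeterSystem M W)

lemma prod_map_alternatingWord_two_mul {G : Type*} [Monoid G] (f : B → G) (s t : B) (j : ℕ) :
    ((alternatingWord s t (2 * j)).map f).prod = (f s * f t) ^ j := by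
  induction j with
  | zero => simp [alternatingWord]
  | succ j ih =>
    rw [show 2 * (j + 1) = 2 * j + 1 + 1 by ring, alternatingWord_succ', alternatingWord_succ',
      if_neg (Nat.not_even_two_mul_add_one j), if_pos (even_two_mul j)]
    simp [ih, pow_succ', mul_assoc]

theorem exists_eq_mul_wordProd_not_isRightDescent (P : Set B) (w : W) :
    ∃ (u : W) (ω : List B), (∀ x ∈ ω, x ∈ P) ∧ w = u * cs.wordProd ω ∧
      cs.length u + ω.length = cs.length w ∧ ∀ x ∈ P, ¬cs.IsRightDescent u x := by
  induction h : cs.length w using Nat.strong_induction_on generalizing w with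
  | _ n ih =>
  by_cases hw : ∃ x ∈ P, cs.IsRightDescent w x
  · obtain ⟨x, hxP, hx⟩ := hw
    have hlen := cs.isRightDescent_iff.mp hx
    obtain ⟨u, ω, hωP, hw', hlen', hu⟩ := ih _ (by omega) (w * cs.simple x) rfl
    refine ⟨u, ω ++ [x], ?_, ?_, ?_, hu⟩
    · simpa [or_imp, forall_and] using ⟨hωP, hxP⟩
    · rw [wordProd_append, wordProd_singleton, ← mul_assoc, ← hw', simple_mul_simple_cancel_right]
    · simp only [length_append, length_singleton]
      omega
  · push Not at hw
    exact ⟨w, [], by simp, by simp, by simp [h], hw⟩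

theorem eq_alternatingWord_of_isReduced_concat {s t : B} {ω : List B}
    (hω : ∀ x ∈ ω, x = s ∨ x = t) (hred : cs.IsReduced (ω.concat s)) :
    ω = alternatingWord s t ω.length := by
  induction ω using List.reverseRecOn generalizing s t with
  | nil => rfl
  | append_singleton ω x ih =>
    have hx : x ≠ s := by
      rintro rfl
      have h := cs.length_wordProd_le ω
      rw [IsReduced, concat_eq_append, wordProd_append, wordProd_append, wordProd_singleton,
        mul_assoc, simple_mul_simple_self, mul_one] at hred
      simp at hred
      omega
    have hxt : x = t := (hω x (by simp)).resolve_left hx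
    subst hxt
    have hprefix : cs.IsReduced (ω.concat x) := by
      have h := hred.take (ω ++ [x]).length
      rwa [concat_eq_append, take_left, ← concat_eq_append] at h
    rw [ih (fun y hy => (hω y (by simp [hy])).symm) hprefix, length_append, length_singleton,
      alternatingWord_succ, length_alternatingWord, concat_eq_append]

end CoxeterSystem

namespace CoxeterMatrix

open CoxeterSystem Matrix

variable {B : Type*}

lemma cos_pi_div_diagonal (M : CoxeterMatrix B) (s : B) : cos (π / M s s) = -1 := by
  rw [M.diagonal, Nat.cast_one, div_one, cos_pi]

variable [Fintype B] [DecidableEq B] (M : CoxeterMatrix B)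

/-- The Tits form `B(e_s, e_t) = -cos (π / m_st)`. As `π / 0 = 0` in Lean, the label `∞`
(encoded by `0`) gets the value `-1`, as it should. -/
noncomputable def titsForm : Matrix B B ℝ := Matrix.of fun s t => -cos (π / M s t)

noncomputable def reflection (s : B) : Module.End ℝ (B → ℝ) where
  toFun v := v - Pi.single s (2 * (M.titsForm *ᵥ v) s)
  map_add' v w := by
    simp only [mulVec_add, Pi.add_apply, mul_add, Pi.single_add]
    abel
  map_smul' r v := by
    simp only [mulVec_smul, Pi.smul_apply, smul_eq_mul, RingHom.id_apply, smul_sub,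
      ← Pi.single_smul', mul_left_comm]

variable {M}

lemma reflection_apply (s : B) (v : B → ℝ) :
    M.reflection s v = v - Pi.single s (2 * (M.titsForm *ᵥ v) s) := rfl

lemma titsForm_mulVec_single (s t : B) (x : ℝ) :
    (M.titsForm *ᵥ Pi.single t x) s = -cos (π / M s t) * x := by
  simp [mulVec_single, titsForm]

lemma titsForm_mulVec_single_self (s : B) (x : ℝ) : (M.titsForm *ᵥ Pi.single s x) s = x := by
  rw [titsForm_mulVec_single, cos_pi_div_diagonal, neg_neg, one_mul]

lemma reflection_of_titsForm_eq_zero {s : B} {v : B → ℝ} (h : (M.titsForm *ᵥ v) s = 0) :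
    M.reflection s v = v := by
  simp [reflection_apply, h]

lemma reflection_single_self (s : B) (x : ℝ) :
    M.reflection s (Pi.single s x) = Pi.single s (-x) := by
  rw [reflection_apply, titsForm_mulVec_single_self, ← Pi.single_sub]
  congr 1
  ring

lemma reflection_mul_self (s : B) : M.reflection s * M.reflection s = 1 := by
  refine LinearMap.ext fun v => ?_
  rw [Module.End.mul_apply, Module.End.one_apply, reflection_apply _ (M.reflection s v),
    reflection_apply, mulVec_sub, Pi.sub_apply, titsForm_mulVec_single_self, sub_sub,
    ← Pi.single_add, show ∀ x : ℝ, 2 * x + 2 * (x - 2 * x) = 0 from fun x => by ring,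
    Pi.single_zero, sub_zero]

lemma reflection_plane_left (s t : B) (x y : ℝ) :
    M.reflection s (Pi.single s x + Pi.single t y) =
      Pi.single s (2 * cos (π / M s t) * y - x) + Pi.single t y := by
  rw [reflection_apply, mulVec_add, Pi.add_apply, titsForm_mulVec_single_self,
    titsForm_mulVec_single, add_sub_right_comm, ← Pi.single_sub]
  congr 2
  ring

lemma reflection_plane_right (s t : B) (x y : ℝ) :
    M.reflection t (Pi.single s x + Pi.single t y) =
      Pi.single s x + Pi.single t (2 * cos (π / M s t) * x - y) := by
  rw [add_comm, reflection_plane_left, M.symmetric, add_comm]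

lemma prod_map_reflection_alternatingWord (s t : B) (q : ℕ) :
    ((alternatingWord s t q).map M.reflection).prod (Pi.single s 1) =
      if Even q then
        Pi.single s ((U ℝ q).eval (cos (π / M s t))) +
          Pi.single t ((U ℝ (q - 1)).eval (cos (π / M s t)))
      else
        Pi.single s ((U ℝ (q - 1)).eval (cos (π / M s t))) +
          Pi.single t ((U ℝ q).eval (cos (π / M s t))) := by
  induction q with
  | zero => simp [alternatingWord]
  | succ q ih =>
    have hU : (U ℝ ((q + 1 : ℕ) : ℤ)).eval (cos (π / M s t)) =
        2 * cos (π / M s t) * (U ℝ q).eval (cos (π / M s t)) -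
          (U ℝ (q - 1)).eval (cos (π / M s t)) := by
      simp [U_add_one]
    rw [alternatingWord_succ', List.map_cons, List.prod_cons, Module.End.mul_apply, ih]
    rcases Nat.even_or_odd q with hq | hq
    · rw [if_pos hq, if_pos hq, reflection_plane_right, if_neg (by simpa [Nat.even_add_one]), hU,
        Nat.cast_succ, add_sub_cancel_right]
    · have hq' : ¬ Even q := Nat.not_even_iff_odd.mpr hq
      rw [if_neg hq', if_neg hq', reflection_plane_left, if_pos (by simpa [Nat.even_add_one]), hU,
        Nat.cast_succ, add_sub_cancel_right]

lemma exists_nonneg_prod_map_reflection_alternatingWord {s t : B} (hst : s ≠ t) {q : ℕ}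
    (hq : M s t = 0 ∨ q < M s t) :
    ∃ a b : ℝ, 0 ≤ a ∧ 0 ≤ b ∧
      ((alternatingWord s t q).map M.reflection).prod (Pi.single s 1) =
        a • Pi.single s 1 + b • Pi.single t 1 := by
  have hU : ∀ n : ℤ, -1 ≤ n → n ≤ q → 0 ≤ (U ℝ n).eval (cos (π / M s t)) := fun n h1 h2 =>
    U_real_cos_pi_div_nonneg (M.off_diagonal s t hst) h1 (by omega)
  simp only [prod_map_reflection_alternatingWord, ← Pi.single_smul', smul_eq_mul, mul_one]
  split_ifs
  all_goals exact ⟨_, _, hU _ (by omega) (by omega), hU _ (by omega) (by omega), rfl⟩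

lemma reflection_mul_reflection_pow_single_left {s t : B} (hst : s ≠ t) (hm : M s t ≠ 0) :
    ((M.reflection s * M.reflection t) ^ M s t) (Pi.single s 1) = Pi.single s 1 := by
  have hm2 : 2 ≤ M s t := by have := M.off_diagonal s t hst; omega
  rw [← prod_map_alternatingWord_two_mul, prod_map_reflection_alternatingWord,
    if_pos (even_two_mul _), Nat.cast_mul, Nat.cast_two, ← zero_add (2 * ((M s t : ℕ) : ℤ)),
    U_real_cos_pi_div_add_two_mul hm2, ← sub_add_eq_add_sub, U_real_cos_pi_div_add_two_mul hm2]
  simp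

lemma reflection_mul_reflection_pow_single_right {s t : B} (hst : s ≠ t) (hm : M s t ≠ 0) :
    ((M.reflection s * M.reflection t) ^ M s t) (Pi.single t 1) = Pi.single t 1 := by
  have hts := reflection_mul_reflection_pow_single_left hst.symm (M.symmetric s t ▸ hm)
  rw [M.symmetric] at hts
  have hconj : M.reflection t * (M.reflection s * M.reflection t) ^ M s t =
      (M.reflection t * M.reflection s) ^ M s t * M.reflection t :=
    SemiconjBy.pow_right (mul_assoc _ _ _).symm _
  calc ((M.reflection s * M.reflection t) ^ M s t) (Pi.single t 1)
      = (M.reflection t * (M.reflection t * (M.reflection s * M.reflection t) ^ M s t))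
          (Pi.single t 1) := by rw [← mul_assoc, reflection_mul_self, one_mul]
    _ = Pi.single t 1 := by
      rw [hconj, Module.End.mul_apply, Module.End.mul_apply,
        reflection_single_self, Pi.single_neg, map_neg, hts,
        map_neg, reflection_single_self, Pi.single_neg, neg_neg]

lemma reflection_mul_reflection_pow {s t : B} (hst : s ≠ t) (hm : M s t ≠ 0) :
    (M.reflection s * M.reflection t) ^ M s t = 1 := by
  set c := cos (π / M s t) with hc
  have hc2 : 1 - c ^ 2 ≠ 0 := (sub_pos.mpr (sq_cos_pi_div_lt_one
    (by have := M.off_diagonal s t hst; omega))).ne'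
  refine LinearMap.ext fun v => ?_
  -- Split `v = a e_s + b e_t + r` with `r` orthogonal to `e_s, e_t` (solvable as `c² < 1`);
  -- both reflections fix `r`.
  set a := ((M.titsForm *ᵥ v) s + c * (M.titsForm *ᵥ v) t) / (1 - c ^ 2)
  set b := ((M.titsForm *ᵥ v) t + c * (M.titsForm *ᵥ v) s) / (1 - c ^ 2)
  set r := v - a • Pi.single s 1 - b • Pi.single t 1 with hr
  have hrs : (M.titsForm *ᵥ r) s = 0 := by
    simp only [hr, mulVec_sub, mulVec_smul, Pi.sub_apply, Pi.smul_apply, titsForm_mulVec_single,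
      cos_pi_div_diagonal, ← hc, a, b]
    linear_combination (-(M.titsForm *ᵥ v) s) * inv_mul_cancel₀ hc2
  have hrt : (M.titsForm *ᵥ r) t = 0 := by
    simp only [hr, mulVec_sub, mulVec_smul, Pi.sub_apply, Pi.smul_apply, titsForm_mulVec_single,
      cos_pi_div_diagonal, M.symmetric t s, ← hc, a, b]
    linear_combination (-(M.titsForm *ᵥ v) t) * inv_mul_cancel₀ hc2
  have hfix : ∀ j : ℕ, ((M.reflection s * M.reflection t) ^ j) r = r := by
    intro j
    induction j with
    | zero => rfl
    | succ j ih =>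
      rw [pow_succ, Module.End.mul_apply, Module.End.mul_apply, reflection_of_titsForm_eq_zero hrt,
        reflection_of_titsForm_eq_zero hrs, ih]
  rw [show v = a • Pi.single s 1 + b • Pi.single t 1 + r by rw [hr]; abel, map_add, map_add,
    map_smul, map_smul, reflection_mul_reflection_pow_single_left hst hm,
    reflection_mul_reflection_pow_single_right hst hm, hfix, Module.End.one_apply]

theorem isLiftable_reflection : M.IsLiftable M.reflection := by
  intro s t
  rcases eq_or_ne s t with rfl | hst
  · rw [M.diagonal, pow_one, reflection_mul_self]
  rcases eq_or_ne (M s t) 0 with hm | hm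
  · rw [hm, pow_zero]
  · exact reflection_mul_reflection_pow hst hm

end CoxeterMatrix

namespace CoxeterSystem

open List CoxeterMatrix

variable {B : Type*} [Fintype B] [DecidableEq B] {M : CoxeterMatrix B} {W : Type*} [Group W]
  (cs : CoxeterSystem M W)

noncomputable def geometricRepresentation : W →* Module.End ℝ (B → ℝ) :=
  cs.lift ⟨M.reflection, M.isLiftable_reflection⟩

@[simp]
lemma geometricRepresentation_simple (s : B) :
    cs.geometricRepresentation (cs.simple s) = M.reflection s :=
  cs.lift_apply_simple _ s

lemma geometricRepresentation_wordProd (ω : List B) :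
    cs.geometricRepresentation (cs.wordProd ω) = (ω.map M.reflection).prod := by
  simp [wordProd, map_list_prod, Function.comp_def]

/-- Tits' lemma. For a right descent `t` of `w`, write `w = u v` with `v ∈ ⟨s, t⟩` and `u` without
right descents in `{s, t}`. Then `v` is an alternating word ending in `t` of length `< m_st`, which
sends `e_s` to a nonnegative combination of `e_s` and `e_t`, and induction applies to `u`. -/
theorem geometricRepresentation_single_nonneg {w : W} {s : B} (hs : ¬cs.IsRightDescent w s) :
    0 ≤ cs.geometricRepresentation w (Pi.single s 1) := by
  induction h : cs.length w using Nat.strong_induction_on generalizing w s with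
  | _ n ih =>
  rcases eq_or_ne w 1 with rfl | hw
  · simp [Pi.single_nonneg]
  obtain ⟨t, ht⟩ := cs.exists_rightDescent_of_ne_one hw
  have hst : s ≠ t := by rintro rfl; exact hs ht
  obtain ⟨u, ω, hω, rfl, hlen, hu⟩ := cs.exists_eq_mul_wordProd_not_isRightDescent {s, t} w
  have hω_ne : ω ≠ [] := by
    rintro rfl
    simp only [wordProd_nil, mul_one] at ht
    exact hu t (by simp) ht
  have hred : cs.IsReduced (ω.concat s) := by
    have h1 := cs.not_isRightDescent_iff.mp hs
    have h2 := cs.length_mul_le u (cs.wordProd (ω.concat s))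
    have h3 := cs.length_wordProd_le (ω.concat s)
    rw [mul_assoc, ← wordProd_concat] at h1
    simp only [length_concat] at h3
    rw [IsReduced, length_concat]
    omega
  have hωst : ∀ x ∈ ω, x = s ∨ x = t := hω
  have halt := cs.eq_alternatingWord_of_isReduced_concat hωst hred
  have hq : M s t = 0 ∨ ω.length < M s t := by
    refine or_iff_not_imp_left.mpr fun hm => ?_
    have h := cs.not_isReduced_alternatingWord t s (M.symmetric s t ▸ hm) (m := ω.length + 1)
    rw [alternatingWord_succ, ← halt, M.symmetric] at h
    by_contra hle
    exact h (by omega) hred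
  obtain ⟨a, b, ha, hb, hab⟩ :=
    exists_nonneg_prod_map_reflection_alternatingWord (M := M) hst hq
  have hu_s := ih _ (by have := length_pos_iff.mpr hω_ne; omega) (hu s (by simp)) rfl
  have hu_t := ih _ (by have := length_pos_iff.mpr hω_ne; omega) (hu t (by simp)) rfl
  rw [map_mul, Module.End.mul_apply, geometricRepresentation_wordProd, halt, hab, map_add,
    map_smul, map_smul]
  exact add_nonneg (smul_nonneg ha hu_s) (smul_nonneg hb hu_t)

theorem geometricRepresentation_injective : Function.Injective cs.geometricRepresentation := by
  refine (injective_iff_map_eq_one _).mpr fun w hw => ?_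
  by_contra hw1
  obtain ⟨s, hs⟩ := cs.exists_rightDescent_of_ne_one hw1
  have hnonneg := cs.geometricRepresentation_single_nonneg
    (cs.isRightDescent_iff_not_isRightDescent_mul.mp hs) s
  rw [map_mul, hw, one_mul, geometricRepresentation_simple, reflection_single_self] at hnonneg
  simp at hnonneg
  linarith

end CoxeterSystem

section Embedding

open CoxeterMatrix Matrix

variable {B₁ B₂ : Type*} {ι : B₁ → B₂}

lemma Function.Injective.extend_single [DecidableEq B₁] [DecidableEq B₂] {α : Type*} [Zero α]
    (hι : Function.Injective ι) (s : B₁) (x : α) :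
    Function.extend ι (Pi.single s x) 0 = Pi.single (M := fun _ => α) (ι s) x := by
  funext y
  by_cases hy : ∃ z, ι z = y
  · obtain ⟨z, rfl⟩ := hy
    simp [hι.extend_apply, Pi.single_apply, hι.eq_iff]
  · rw [Function.extend_apply' _ _ _ hy, Pi.single_apply, if_neg (fun h => hy ⟨s, h.symm⟩)]
    rfl

variable [Fintype B₁] [Fintype B₂] {M₁ : CoxeterMatrix B₁} {M₂ : CoxeterMatrix B₂}

lemma CoxeterMatrix.titsForm_mulVec_extend (hι : Function.Injective ι) (hM : ∀ x y, M₂ (ι x) (ι y) = M₁ x y)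
    (s : B₁) (f : B₁ → ℝ) :
    (M₂.titsForm *ᵥ Function.extend ι f 0) (ι s) = (M₁.titsForm *ᵥ f) s := by
  simp only [mulVec, dotProduct]
  refine (Fintype.sum_of_injective ι hι _ _ (fun y hy => ?_) fun x => ?_).symm
  · rw [Function.extend_apply' _ _ _ (by simpa using hy), Pi.zero_apply, mul_zero]
  · simp [titsForm, hι.extend_apply, hM]

variable [DecidableEq B₁] [DecidableEq B₂]

lemma CoxeterMatrix.reflection_extend (hι : Function.Injective ι) (hM : ∀ x y, M₂ (ι x) (ι y) = M₁ x y)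
    (s : B₁) (f : B₁ → ℝ) :
    M₂.reflection (ι s) (Function.extend ι f 0) = Function.extend ι (M₁.reflection s f) 0 := by
  have h : Function.extend ι (f - Pi.single s (2 * (M₁.titsForm *ᵥ f) s)) (0 : B₂ → ℝ) =
      Function.extend ι f 0 - Function.extend ι (Pi.single s (2 * (M₁.titsForm *ᵥ f) s)) 0 :=
    map_sub (Function.ExtendByZero.linearMap ℝ ι) _ _
  rw [reflection_apply, reflection_apply, h, hι.extend_single, titsForm_mulVec_extend hι hM]

theorem CoxeterSystem.injective_of_map_simple {W₁ W₂ : Type*} [Group W₁] [Group W₂]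
    (cs₁ : CoxeterSystem M₁ W₁) (cs₂ : CoxeterSystem M₂ W₂) (hι : Function.Injective ι)
    (hM : ∀ x y, M₂ (ι x) (ι y) = M₁ x y) {φ : W₁ →* W₂}
    (hφ : ∀ x, φ (cs₁.simple x) = cs₂.simple (ι x)) : Function.Injective φ := by
  have hintertwine : ∀ w f, cs₂.geometricRepresentation (φ w) (Function.extend ι f 0) =
      Function.extend ι (cs₁.geometricRepresentation w f) 0 := by
    intro w
    induction w using cs₁.simple_induction with
    | simple x => intro f; simp [hφ, reflection_extend hι hM]
    | one => simp
    | mul w w' hw hw' => intro f; simp [hw, hw']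
  refine (injective_iff_map_eq_one φ).mpr fun w hw => cs₁.geometricRepresentation_injective ?_
  refine LinearMap.ext fun f => Function.extend_injective hι (0 : B₂ → ℝ) ?_
  simp [← hintertwine, hw]

end Embedding

namespace ArtinPaper

theorem FiniteType.mono {S : Type u} {M : CoxeterMatrix S} {T R : Set S} (hTR : T ⊆ R)
    (hR : R.Finite) (hft : FiniteType M R) : FiniteType M T := by
  classical
  have := hR.fintype
  have := (hR.subset hTR).fintype
  have : Finite (restrictMatrix M R).Group := hft
  let cs₁ := (restrictMatrix M T).toCoxeterSystem
  let cs₂ := (restrictMatrix M R).toCoxeterSystem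
  have hlift : (restrictMatrix M T).IsLiftable (cs₂.simple ∘ Set.inclusion hTR) :=
    fun x y => cs₂.simple_mul_simple_pow _ _
  exact Finite.of_injective _ (cs₁.injective_of_map_simple cs₂ (Set.inclusion_injective hTR)
    (fun _ _ => rfl) (cs₁.lift_apply_simple hlift))

theorem LocallyReducible.reachable {S : Type u} {M : CoxeterMatrix S}
    (hLR : LocallyReducible M) {a b c : S} (hab : a ≠ b) (hac : a ≠ c) (hbc : b ≠ c)
    (hab' : M a b ≠ 0) (hac' : M a c ≠ 0) (hbc' : M b c ≠ 0) (hft : FiniteType M {a, b, c}) :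
    (ghat M).Reachable a b := by
  rcases hLR a b c hab hac hbc hab' hac' hbc' hft with ⟨h, -⟩ | ⟨h, -⟩ | ⟨hac2, hbc2⟩
  · exact (show (ghat M).Adj a b from ⟨hab, h⟩).reachable
  · exact (show (ghat M).Adj a b from ⟨hab, h⟩).reachable
  · exact (show (ghat M).Adj a c from ⟨hac, hac2⟩).reachable.trans
      (show (ghat M).Adj c b from ⟨hbc.symm, M.symmetric c b ▸ hbc2⟩).reachable

theorem finiteType_clique_subset_component_general
    {S : Type u} (M : CoxeterMatrix S)
    (hLR : LocallyReducible M)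
    (R : Set S) (hcard : 3 ≤ R.ncard)
    (hclique : ∀ s ∈ R, ∀ t ∈ R, s ≠ t → M s t ≠ 0)
    (hft : FiniteType M R) :
    ∃ c : (ghat M).ConnectedComponent, R ⊆ c.supp := by
  have hR : R.Finite := Set.finite_of_ncard_pos (by omega)
  have hreach : ∀ a ∈ R, ∀ b ∈ R, (ghat M).Reachable a b := by
    intro a ha b hb
    rcases eq_or_ne a b with rfl | hab
    · rfl
    obtain ⟨c, hcR, hc⟩ := Set.exists_mem_notMem_of_ncard_lt_ncard (s := {a, b}) (t := R)
      (by rw [Set.ncard_pair hab]; omega)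
    simp only [Set.mem_insert_iff, Set.mem_singleton_iff, not_or] at hc
    exact hLR.reachable hab (Ne.symm hc.1) (Ne.symm hc.2) (hclique a ha b hb hab)
      (hclique a ha c hcR (Ne.symm hc.1)) (hclique b hb c hcR (Ne.symm hc.2))
      (hft.mono (Set.insert_subset ha (Set.insert_subset hb (Set.singleton_subset_iff.mpr hcR))) hR)
  obtain ⟨a, ha⟩ := Set.nonempty_of_ncard_ne_zero (by omega : R.ncard ≠ 0)
  exact ⟨(ghat M).connectedComponentMk a,
    fun b hb => SimpleGraph.ConnectedComponent.sound (hreach b hb a ha)⟩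

/-- Let `A_Γ` be locally reducible and let `R ⊆ S` with `|R| ≥ 3` span a
finite-type clique in `Γ`. Then `R` is contained in a single connected component of `Γ̂`. -/
theorem finiteType_clique_subset_component
    {S : Type u} [Fintype S] (M : CoxeterMatrix S)
    (hLR : LocallyReducible M)
    (R : Set S) (hcard : 3 ≤ R.ncard)
    (hclique : ∀ s ∈ R, ∀ t ∈ R, s ≠ t → M s t ≠ 0)
    (hft : FiniteType M R) :
    ∃ c : (ghat M).ConnectedComponent, R ⊆ c.supp :=
  finiteType_clique_subset_component_general M hLR R hcard hclique hft

end ArtinPaper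
end
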